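/- For every z ∈ ℂ with Re z > 0, the integral I₁(z) := ∫₀^∞ (i−t)·exp((i−t)z)/√(t²−2it) dt converges absolutely and satisfies |(2/π)·I₁(z)| ≤ |exp(iz)|·( √(2/(π·Re z)) + 2/(π·Re z) ); equivalently, the Hankel function of the first kind of order one, H₁^{(1)}(z) = (2i/π)∫₀^∞ (i−t)·exp((i−t)z)/√(t²−2it) dt, satisfies |H₁^{(1)}(z)| ≤ |exp(iz)|·( √(2/(π·Re z)) + 2/(π·Re z) ). -/

import Mathlib

/-!
For `t > 0` we have `t² - 2it = t (t - 2i)` and `‖t - 2i‖ ≥ max 2 t`, so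
`‖√(t² - 2it)‖ ≥ max √(2t) t`; together with `‖i - t‖ ≤ 1 + t` this bounds the integrand by
`‖exp(iz)‖ ((2t)^(-1/2) + 1) e^(-t Re z)`. By `Γ(1/2) = √π` this majorant integrates to
`‖exp(iz)‖ (√(π / (2 Re z)) + 1 / Re z)`, and the factor `2/π` gives the bound.
-/

noncomputable section

open Complex MeasureTheory

def csqrt (z : ℂ) : ℂ := z ^ (1 / 2 : ℂ)

open Set
open scoped Real

lemma norm_csqrt (w : ℂ) : ‖csqrt w‖ = √‖w‖ := by
  rw [csqrt, show (1 / 2 : ℂ) = ((1 / 2 : ℝ) : ℂ) by norm_num, norm_cpow_real,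
    Real.sqrt_eq_rpow]

lemma norm_I_sub_div_csqrt_le {t : ℝ} (ht : 0 < t) :
    ‖(I - t) / csqrt ((t : ℂ) ^ 2 - 2 * I * t)‖ ≤ (√(2 * t))⁻¹ + 1 := by
  have hs : ‖csqrt ((t : ℂ) ^ 2 - 2 * I * t)‖ = √(t * ‖(t : ℂ) - 2 * I‖) := by
    rw [norm_csqrt, show (t : ℂ) ^ 2 - 2 * I * t = t * (t - 2 * I) by ring, norm_mul,
      Complex.norm_of_nonneg ht.le]
  set s := √(t * ‖(t : ℂ) - 2 * I‖)
  have h_two_le : 2 ≤ ‖(t : ℂ) - 2 * I‖ := by simpa using abs_im_le_norm ((t : ℂ) - 2 * I)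
  have h_t_le : t ≤ ‖(t : ℂ) - 2 * I‖ := by
    simpa [abs_of_pos ht] using abs_re_le_norm ((t : ℂ) - 2 * I)
  have hs_sqrt : √(2 * t) ≤ s := Real.sqrt_le_sqrt (by nlinarith)
  have hs_t : t ≤ s := by
    calc t = √(t * t) := (Real.sqrt_mul_self ht.le).symm
      _ ≤ s := Real.sqrt_le_sqrt (by nlinarith)
  have hnum : ‖I - (t : ℂ)‖ ≤ 1 + t := by
    simpa [abs_of_pos ht] using norm_sub_le I (t : ℂ)
  have hs_pos : 0 < s := (Real.sqrt_pos.mpr (by positivity)).trans_le hs_sqrt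
  calc ‖(I - t) / csqrt ((t : ℂ) ^ 2 - 2 * I * t)‖ = ‖I - (t : ℂ)‖ / s := by rw [norm_div, hs]
    _ ≤ (1 + t) / s := by gcongr
    _ = s⁻¹ + t / s := by ring
    _ ≤ (√(2 * t))⁻¹ + 1 := by
      gcongr
      exact (div_le_one hs_pos).mpr hs_t

lemma norm_exp_I_sub_mul (z : ℂ) (t : ℝ) :
    ‖exp ((I - t) * z)‖ = ‖exp (I * z)‖ * Real.exp (-(z.re * t)) := by
  rw [sub_mul, Complex.exp_sub, norm_div, Complex.norm_exp, Complex.norm_exp, div_eq_mul_inv,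
    ← Real.exp_neg]
  simp [mul_comm]

def hankelIntegrand (z : ℂ) (t : ℝ) : ℂ :=
  (I - t) * exp ((I - t) * z) / csqrt ((t : ℂ) ^ 2 - 2 * I * t)

lemma norm_hankelIntegrand_le (z : ℂ) {t : ℝ} (ht : 0 < t) :
    ‖hankelIntegrand z t‖ ≤ ‖exp (I * z)‖ * (((√(2 * t))⁻¹ + 1) * Real.exp (-(z.re * t))) := by
  rw [hankelIntegrand, mul_div_right_comm, norm_mul, norm_exp_I_sub_mul]
  calc _ ≤ ((√(2 * t))⁻¹ + 1) * (‖exp (I * z)‖ * Real.exp (-(z.re * t))) := by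
        gcongr; exact norm_I_sub_div_csqrt_le ht
    _ = _ := by ring

lemma measurable_hankelIntegrand (z : ℂ) : Measurable (hankelIntegrand z) := by
  unfold hankelIntegrand csqrt; fun_prop

lemma integrableOn_rpow_sub_one_mul_exp_neg_mul {a x : ℝ} (ha : 0 < a) (hx : 0 < x) :
    IntegrableOn (fun t : ℝ => t ^ (a - 1) * Real.exp (-(x * t))) (Ioi 0) := by
  simpa [neg_mul] using
    integrableOn_rpow_mul_exp_neg_mul_rpow (by linarith : -1 < a - 1) one_pos hx

lemma inv_sqrt_add_one_mul_exp_eq {x t : ℝ} (ht : 0 < t) :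
    ((√(2 * t))⁻¹ + 1) * Real.exp (-(x * t)) =
      (√2)⁻¹ * (t ^ ((1 / 2 : ℝ) - 1) * Real.exp (-(x * t))) +
        t ^ ((1 : ℝ) - 1) * Real.exp (-(x * t)) := by
  rw [show (1 / 2 : ℝ) - 1 = -(1 / 2) by norm_num, Real.rpow_neg ht.le, ← Real.sqrt_eq_rpow,
    Real.sqrt_mul zero_le_two, sub_self, Real.rpow_zero]
  ring

lemma integrableOn_inv_sqrt_add_one_mul_exp {x : ℝ} (hx : 0 < x) :
    IntegrableOn (fun t => ((√(2 * t))⁻¹ + 1) * Real.exp (-(x * t))) (Ioi 0) :=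
  IntegrableOn.congr_fun (((integrableOn_rpow_sub_one_mul_exp_neg_mul one_half_pos hx).const_mul
    (√2)⁻¹).add (integrableOn_rpow_sub_one_mul_exp_neg_mul one_pos hx))
    (fun _ ht => (inv_sqrt_add_one_mul_exp_eq ht).symm) measurableSet_Ioi

lemma integral_inv_sqrt_add_one_mul_exp {x : ℝ} (hx : 0 < x) :
    ∫ t in Ioi 0, ((√(2 * t))⁻¹ + 1) * Real.exp (-(x * t)) = √(π / (2 * x)) + 1 / x := by
  rw [setIntegral_congr_fun measurableSet_Ioi (fun _ ht => inv_sqrt_add_one_mul_exp_eq ht),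
    integral_add ((integrableOn_rpow_sub_one_mul_exp_neg_mul one_half_pos hx).const_mul _)
      (integrableOn_rpow_sub_one_mul_exp_neg_mul one_pos hx),
    integral_const_mul, Real.integral_rpow_mul_exp_neg_mul_Ioi one_half_pos hx,
    Real.integral_rpow_mul_exp_neg_mul_Ioi one_pos hx, Real.Gamma_one_half_eq, Real.Gamma_one,
    ← Real.sqrt_eq_rpow, Real.rpow_one, mul_one]
  congr 1
  rw [← Real.sqrt_inv, ← Real.sqrt_mul (by positivity), ← Real.sqrt_mul (by positivity)]
  congr 1
  field_simp

lemma ae_norm_hankelIntegrand_le (z : ℂ) :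
    ∀ᵐ t ∂volume.restrict (Ioi 0),
      ‖hankelIntegrand z t‖ ≤ ‖exp (I * z)‖ * (((√(2 * t))⁻¹ + 1) * Real.exp (-(z.re * t))) :=
  (ae_restrict_iff' measurableSet_Ioi).mpr (.of_forall fun _ ht => norm_hankelIntegrand_le z ht)

lemma integrableOn_hankelIntegrand {z : ℂ} (hz : 0 < z.re) :
    IntegrableOn (hankelIntegrand z) (Ioi 0) :=
  Integrable.mono' ((integrableOn_inv_sqrt_add_one_mul_exp hz).const_mul _)
    (measurable_hankelIntegrand z).aestronglyMeasurable (ae_norm_hankelIntegrand_le z)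

lemma norm_integral_hankelIntegrand_le {z : ℂ} (hz : 0 < z.re) :
    ‖∫ t in Ioi 0, hankelIntegrand z t‖ ≤ ‖exp (I * z)‖ * (√(π / (2 * z.re)) + 1 / z.re) := by
  rw [← integral_inv_sqrt_add_one_mul_exp hz, ← integral_const_mul]
  exact norm_integral_le_of_norm_le ((integrableOn_inv_sqrt_add_one_mul_exp hz).const_mul _)
    (ae_norm_hankelIntegrand_le z)

lemma two_div_pi_mul_sqrt_add {x : ℝ} (hx : 0 < x) :
    2 / π * (√(π / (2 * x)) + 1 / x) = √(2 / (π * x)) + 2 / (π * x) := by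
  have h : 2 / π = √((2 / π) ^ 2) := (Real.sqrt_sq (by positivity)).symm
  rw [mul_add, h, ← Real.sqrt_mul (by positivity), ← h]
  congr 1
  · congr 1; field_simp
  · field_simp

/-- For `Re z > 0`, the integral representation
`H₁⁽¹⁾(z) = (2i/π) ∫₀^∞ (i−t)·exp((i−t)z)/√(t²−2it) dt` of the Hankel function of the first kind
of order one converges absolutely and
`|H₁⁽¹⁾(z)| ≤ |exp(iz)|·(√(2/(π·Re z)) + 2/(π·Re z))`. -/
theorem hankel_one_bound (z : ℂ) (hz : 0 < z.re) :
    IntegrableOn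
      (fun t : ℝ => (Complex.I - (t : ℂ)) * Complex.exp ((Complex.I - (t : ℂ)) * z) /
        csqrt ((t : ℂ) ^ 2 - 2 * Complex.I * t))
      (Set.Ioi 0) volume ∧
    ‖((2 : ℂ) / (Real.pi : ℂ)) *
        ∫ t in Set.Ioi (0 : ℝ),
          (Complex.I - (t : ℂ)) * Complex.exp ((Complex.I - (t : ℂ)) * z) /
            csqrt ((t : ℂ) ^ 2 - 2 * Complex.I * t)‖ ≤
      ‖Complex.exp (Complex.I * z)‖ * (Real.sqrt (2 / (Real.pi * z.re)) + 2 / (Real.pi * z.re)) := by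
  refine ⟨integrableOn_hankelIntegrand hz, ?_⟩
  have h_two_div_pi : ‖(2 : ℂ) / π‖ = 2 / π := by
    rw [← Complex.ofReal_ofNat, ← Complex.ofReal_div, Complex.norm_of_nonneg (by positivity)]
  calc ‖(2 : ℂ) / π * ∫ t in Ioi 0, hankelIntegrand z t‖
      ≤ 2 / π * (‖exp (I * z)‖ * (√(π / (2 * z.re)) + 1 / z.re)) := by
        rw [norm_mul, h_two_div_pi]
        gcongr
        exact norm_integral_hankelIntegrand_le hz
    _ = _ := by rw [mul_left_comm, two_div_pi_mul_sqrt_add hz]
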